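/- arXiv:2601.07828 — 3 statements merged into one kernel-verified Lean document; each statement's English description precedes it below -/
import Mathlib

section
/- In any (1,d)-representation of an edge-bicoloured graph containing a red n×k grid with vertices u_{i,j} (0 ≤ i ≤ n, 0 ≤ j ≤ k), every unit 4-cycle u_{i,j} u_{i+1,j} u_{i+1,j+1} u_{i,j+1} maps to a parallelogram, and consequently the vector equality u_{0,k} − u_{0,0} = u_{n,k} − u_{n,0} holds. -/
/-!
A planar rhombus is a parallelogram: its diagonals are orthogonal to each other and to
the difference of their midpoints, which therefore vanishes. Injectivity of the grid keeps
opposite corners of each unit square apart, so every unit square is a parallelogram; the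
vectors `u (i + 1) j - u i j` are then independent of `j`, and telescoping in `i` compares
the two ends of the grid.
-/

section Rhombus

open Module Submodule RealInnerProductSpace

variable {V : Type*} [NormedAddCommGroup V] [InnerProductSpace ℝ V] [Fact (finrank ℝ V = 2)]

theorem eq_zero_of_inner_eq_zero_of_inner_eq_zero {p q v : V} (hp : p ≠ 0) (hq : q ≠ 0)
    (hpq : ⟪p, q⟫ = 0) (hpv : ⟪p, v⟫ = 0) (hqv : ⟪q, v⟫ = 0) : v = 0 := by
  obtain ⟨a, rfl⟩ := mem_span_singleton.mp
    (mem_span_singleton_of_inner_eq_zero_of_inner_eq_zero hp hq hpv hpq)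
  rw [← inner_self_eq_zero (𝕜 := ℝ), inner_smul_left, hqv, mul_zero]

theorem sub_eq_sub_of_rhombus {A B C D : V} {r : ℝ} (hAC : A ≠ C) (hBD : B ≠ D)
    (hAB : dist A B = r) (hBC : dist B C = r) (hCD : dist C D = r) (hDA : dist D A = r) :
    B - A = C - D := by
  have hsq : ∀ {x y : V}, dist x y = r → ‖x - y‖ ^ 2 = r ^ 2 := fun h => by
    rw [← dist_eq_norm, h]
  have hAB := hsq hAB; have hBC := hsq hBC; have hCD := hsq hCD; have hDA := hsq hDA
  simp only [norm_sub_sq_real] at hAB hBC hCD hDA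
  rw [sub_eq_sub_iff_add_eq_add, add_comm C, ← sub_eq_zero]
  refine eq_zero_of_inner_eq_zero_of_inner_eq_zero (sub_ne_zero.mpr hBD)
    (sub_ne_zero.mpr hAC.symm) ?_ ?_ ?_ <;>
  · simp only [inner_sub_left, inner_sub_right, inner_add_right,
      real_inner_self_eq_norm_sq]
    linarith [real_inner_comm A B, real_inner_comm A C, real_inner_comm A D,
      real_inner_comm B C, real_inner_comm B D, real_inner_comm C D]

end Rhombus

theorem sub_eq_sub_of_forall_parallelogram {G : Type*} [AddCommGroup G] {n k : ℕ}
    {u : ℕ → ℕ → G}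
    (h : ∀ i j, i < n → j < k → u (i + 1) j - u i j = u (i + 1) (j + 1) - u i (j + 1)) :
    u 0 k - u 0 0 = u n k - u n 0 := by
  have hstep : ∀ j < k, u n (j + 1) - u 0 (j + 1) = u n j - u 0 j := fun j hj => by
    rw [← Finset.sum_range_sub (u · j), ← Finset.sum_range_sub (u · (j + 1))]
    exact Finset.sum_congr rfl fun i hi => (h i j (Finset.mem_range.mp hi) hj).symm
  have hconst : ∀ j ≤ k, u n j - u 0 j = u n 0 - u 0 0 := fun j hj => by
    induction j with
    | zero => rfl
    | succ j ih => rw [hstep j hj, ih (Nat.le_of_succ_le hj)]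
  rw [sub_eq_sub_iff_sub_eq_sub, ← neg_sub, hconst k le_rfl, neg_sub]

/-- In any `(1,d)`-representation of a graph containing a red `n×k` grid
(with injectively placed vertices `u i j`, unit-length grid edges), every unit
4-cycle maps to a parallelogram, and `u 0 k − u 0 0 = u n k − u n 0`. -/
theorem grid_parallelogram (n k : ℕ) (u : ℕ → ℕ → EuclideanSpace ℝ (Fin 2))
    (hinj : ∀ i j i' j', i ≤ n → j ≤ k → i' ≤ n → j' ≤ k →
      u i j = u i' j' → i = i' ∧ j = j')
    (hrow : ∀ i j, i ≤ n → j < k → dist (u i j) (u i (j + 1)) = 1)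
    (hcol : ∀ i j, i < n → j ≤ k → dist (u i j) (u (i + 1) j) = 1) :
    (∀ i j, i < n → j < k →
      u (i + 1) j - u i j = u (i + 1) (j + 1) - u i (j + 1)) ∧
    u 0 k - u 0 0 = u n k - u n 0 := by
  have : Fact (Module.finrank ℝ (EuclideanSpace ℝ (Fin 2)) = 2) := ⟨finrank_euclideanSpace_fin⟩
  have hsquare : ∀ i j, i < n → j < k →
      u (i + 1) j - u i j = u (i + 1) (j + 1) - u i (j + 1) := fun i j hi hj =>
    sub_eq_sub_of_rhombus
      (fun h => by have := hinj _ _ _ _ hi.le hj.le hi hj h; omega)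
      (fun h => by have := hinj _ _ _ _ hi hj.le hi.le hj h; omega)
      (hcol i j hi hj.le) (hrow (i + 1) j hi hj)
      (by rw [dist_comm]; exact hcol i (j + 1) hi hj)
      (by rw [dist_comm]; exact hrow i j hi.le hj)
  exact ⟨hsquare, sub_eq_sub_of_forall_parallelogram hsquare⟩
end

section
/- If A, B, C, D are four pairwise distinct points in ℝ² with |AB| = |BC| = |CD| = |DA|, then ABCD is a parallelogram (vector AB equals vector DC): B − A = C − D. -/
/-!
Each diagonal of the quadrilateral lies on the perpendicular bisector of the other. Hence the
diagonals `C - A` and `D - B` are orthogonal, and the vector joining their midpoints is orthogonal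
to both, since each midpoint lies on the perpendicular bisector of the other diagonal. In the plane
two orthogonal nonzero vectors span everything, so the midpoints coincide: `A + C = B + D`.
-/

open Module EuclideanGeometry AffineSubspace
open scoped RealInnerProductSpace

section

variable {V P : Type*} [NormedAddCommGroup V] [InnerProductSpace ℝ V] [MetricSpace P]
  [NormedAddTorsor V P]

theorem eq_zero_of_inner_eq_zero_of_orthogonal_pair (hV : finrank ℝ V = 2) {u v w : V}
    (hu : u ≠ 0) (hv : v ≠ 0) (huv : ⟪u, v⟫ = 0) (hwu : ⟪w, u⟫ = 0) (hwv : ⟪w, v⟫ = 0) :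
    w = 0 := by
  have hind : LinearIndependent ℝ ![u, v] := by
    refine linearIndependent_of_ne_zero_of_inner_eq_zero (by simp [Fin.forall_fin_two, hu, hv]) ?_
    intro i j hij
    fin_cases i <;> fin_cases j <;> simp_all [real_inner_comm]
  have hspan : Submodule.span ℝ {u, v} = ⊤ := by
    simpa [Matrix.range_cons, Set.pair_comm] using
      hind.span_eq_top_of_card_eq_finrank (by simp [hV])
  obtain ⟨a, b, rfl⟩ := Submodule.mem_span_pair.mp (hspan ▸ Submodule.mem_top : w ∈ _)
  rw [← inner_self_eq_zero (𝕜 := ℝ), inner_add_right, real_inner_smul_right,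
    real_inner_smul_right, hwu, hwv]
  ring

theorem midpoint_eq_midpoint_of_mem_perpBisector (hV : finrank ℝ V = 2) {a b c d : P}
    (hac : a ≠ c) (hbd : b ≠ d) (hb : b ∈ perpBisector a c) (hd : d ∈ perpBisector a c)
    (ha : a ∈ perpBisector b d) (hc : c ∈ perpBisector b d) :
    midpoint ℝ a c = midpoint ℝ b d := by
  have hdiag : ⟪c -ᵥ a, d -ᵥ b⟫ = 0 := by
    rw [← Submodule.mem_orthogonal_singleton_iff_inner_right, ← direction_perpBisector]
    exact vsub_mem_direction hd hb
  have hn : midpoint ℝ b d ∈ perpBisector a c := AffineMap.lineMap_mem _ hb hd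
  have hm : midpoint ℝ a c ∈ perpBisector b d := AffineMap.lineMap_mem _ ha hc
  rw [mem_perpBisector_iff_inner_eq_zero] at hn hm
  rw [← neg_vsub_eq_vsub_rev, inner_neg_left, neg_eq_zero] at hm
  have hmn : midpoint ℝ b d -ᵥ midpoint ℝ a c = 0 :=
    eq_zero_of_inner_eq_zero_of_orthogonal_pair hV (vsub_ne_zero.mpr hac.symm)
      (vsub_ne_zero.mpr hbd.symm) hdiag hn hm
  exact (vsub_eq_zero_iff_eq.mp hmn).symm

end

theorem equilateral_quadrilateral_is_rhombus_general (A B C D : EuclideanSpace ℝ (Fin 2))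
    (hAC : A ≠ C) (hBD : B ≠ D)
    (h1 : dist A B = dist B C) (h2 : dist B C = dist C D) (h3 : dist C D = dist D A) :
    B - A = C - D := by
  have hmid : midpoint ℝ B D = midpoint ℝ A C := by
    refine midpoint_eq_midpoint_of_mem_perpBisector finrank_euclideanSpace_fin hBD hAC ?_ ?_ ?_ ?_
      <;> rw [mem_perpBisector_iff_dist_eq] <;> simp only [dist_comm] at h1 h2 h3 ⊢ <;> linarith
  exact (midpoint_eq_midpoint_iff_vsub_eq_vsub ℝ).mp hmid

/-- Four pairwise distinct points in the plane with
`|AB| = |BC| = |CD| = |DA|` form a parallelogram: `B − A = C − D`. -/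
theorem equilateral_quadrilateral_is_rhombus (A B C D : EuclideanSpace ℝ (Fin 2))
    (hAB : A ≠ B) (hAC : A ≠ C) (hAD : A ≠ D) (hBC : B ≠ C) (hBD : B ≠ D) (hCD : C ≠ D)
    (h1 : dist A B = dist B C) (h2 : dist B C = dist C D) (h3 : dist C D = dist D A) :
    B - A = C - D :=
  equilateral_quadrilateral_is_rhombus_general A B C D hAC hBD h1 h2 h3
end

section
/- Let n ≥ 3 and let u₀, u_n ∈ ℝ² be points with 0 < |u₀u_n| < n. Then there exist infinitely many tuples (u₀, u₁, …, u_n) of points in ℝ² forming a unit-distance path (|u_i u_{i+1}| = 1 for all 0 ≤ i ≤ n−1) with all n+1 points pairwise distinct, such that moreover for each index i the point u_i differs across the different tuples (for 1 ≤ i ≤ n−1), |u₀u_i| = i for 0 ≤ i ≤ ⌊n/2⌋, and |u_n u_i| = n − i for ⌊n/2⌋+1 ≤ i ≤ n. -/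
/-!
Put `u₀ = 0` and `uₙ = d > 0` in `ℂ`, and let `p = ⌊n/2⌋`, `q = n - 1 - p`. For a parameter `r`
choose the corner `X = corner₁` with `|X| = p`, `|X - d| = r` above the real axis, and the
corner `Y = corner₂` with `|Y - d| = q`, `|Y - X| = 1` on the other side of the line `Xd` from
`0`. The path walks in unit steps along the segment `[0, X]`, across the edge `XY`, and along
`[Y, d]`; the admissible `r` form a nonempty open interval. Since two circles with distinct
centres meet in at most two points, each coincidence of two vertices of one path, and each value
of `Y`, occurs for only finitely many `r`. A sequence of parameters avoiding the coincidences and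
with pairwise distinct `Y` gives the family.
-/

open Complex ComplexConjugate AffineMap Metric Set Function Module

lemma lineMap_right_injective {k V : Type*} [Field k] [AddCommGroup V] [Module k V]
    {a z z' : V} {c : k} (hc : c ≠ 0) (h : lineMap a z c = lineMap a z' c) : z = z' := by
  rw [lineMap_apply_module', lineMap_apply_module', add_left_inj] at h
  exact sub_left_injective (smul_right_injective V hc h)

lemma finite_sphere_inter_sphere {V P : Type*} [NormedAddCommGroup V] [InnerProductSpace ℝ V]
    [MetricSpace P] [NormedAddTorsor V P] [FiniteDimensional ℝ V] (hV : finrank ℝ V = 2)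
    {c₁ c₂ : P} (hc : c₁ ≠ c₂) (ρ₁ ρ₂ : ℝ) : (sphere c₁ ρ₁ ∩ sphere c₂ ρ₂).Finite := by
  rcases (sphere c₁ ρ₁ ∩ sphere c₂ ρ₂).subsingleton_or_nontrivial with hs | ⟨p₁, hp₁, p₂, hp₂, hne⟩
  · exact hs.finite
  · exact (Set.toFinite {p₁, p₂}).subset fun p hp =>
      EuclideanGeometry.eq_of_dist_eq_of_dist_eq_of_finrank_eq_two hV hc hne hp₁.1 hp₂.1 hp.1
        hp₁.2 hp₂.2 hp.2

lemma exists_seq_mem_injective_comp {α β : Type*} {s : Set α} (hs : s.Infinite) {g : α → β}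
    (hg : ∀ c, {x ∈ s | g x = c}.Finite) : ∃ ρ : ℕ → α, (∀ j, ρ j ∈ s) ∧ Injective (g ∘ ρ) := by
  have him : (g '' s).Infinite := fun hfin => hs <| (hfin.biUnion fun c _ => hg c).subset
    fun x hx => mem_biUnion (mem_image_of_mem g hx) ⟨hx, rfl⟩
  choose ρ hρs hρ using fun j => (him.natEmbedding _ j).2
  refine ⟨ρ, hρs, fun j j' h => him.natEmbedding.injective (Subtype.ext ?_)⟩
  simpa only [comp_apply, hρ] using h

lemma exists_isometry_complex {E : Type*} [NormedAddCommGroup E] [InnerProductSpace ℝ E]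
    [FiniteDimensional ℝ E] (hE : finrank ℝ E = 2) {u v : E} (huv : u ≠ v) :
    ∃ φ : ℂ → E, Isometry φ ∧ φ 0 = u ∧ φ (dist u v) = v := by
  let L := Complex.isometryOfOrthonormal ((stdOrthonormalBasis ℝ E).reindex (finCongr hE))
  have hd : (dist u v : ℂ) ≠ 0 := ofReal_ne_zero.2 (dist_ne_zero.2 huv)
  set w : ℂ := L.symm (v - u) / dist u v
  have hw : ‖w‖ = 1 := by
    rw [norm_div, LinearIsometryEquiv.norm_map, norm_real, Real.norm_of_nonneg dist_nonneg,
      dist_comm, dist_eq_norm, div_self (norm_ne_zero_iff.2 (sub_ne_zero.2 huv.symm))]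
  refine ⟨fun z => L (z * w) + u, Isometry.of_dist_eq fun z z' => ?_, by simp, ?_⟩
  · rw [dist_add_right, L.dist_map, dist_eq_norm, ← sub_mul, norm_mul, hw, mul_one,
      dist_eq_norm]
  · simp only [w, mul_div_cancel₀ _ hd, LinearIsometryEquiv.apply_symm_apply, sub_add_cancel]

namespace UnitDistancePath

noncomputable section

-- Twice the signed area of the triangle `a b z`: positive iff `z` is left of the line `a → b`.
def side (a b z : ℂ) : ℝ := ((z - a) * conj (b - a)).im

lemma side_rotate (a b c : ℂ) : side a b c = side b c a := by
  simp only [side, mul_im, map_sub, conj_re, conj_im, sub_re, sub_im]; ring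

lemma side_swap (a b c : ℂ) : side a b c = -side b a c := by
  simp only [side, mul_im, map_sub, conj_re, conj_im, sub_re, sub_im]; ring

lemma side_lineMap (a b z : ℂ) (t : ℝ) : side a b (lineMap b z t) = t * side a b z := by
  simp only [side, lineMap_apply_module', mul_im, map_sub, conj_re, conj_im, sub_re, sub_im,
    add_re, add_im, smul_re, smul_im, smul_eq_mul]
  ring

-- The meeting point of `sphere a ρ₁` and `sphere b ρ₂` to the left of `a → b`, in the frame
-- spanned by `(b - a) / D` and its rotation by `π/2`.
def apex (a b : ℂ) (ρ₁ ρ₂ : ℝ) : ℂ :=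
  let D := dist a b
  let s := (ρ₁ ^ 2 + D ^ 2 - ρ₂ ^ 2) / (2 * D)
  a + (b - a) * ⟨s / D, √(ρ₁ ^ 2 - s ^ 2) / D⟩

section apex

variable {a b : ℂ} {ρ₁ ρ₂ : ℝ}

lemma exists_apex_eq (h₁ : |ρ₁ - ρ₂| < dist a b) (h₂ : dist a b < ρ₁ + ρ₂) :
    ∃ s t : ℝ, 0 < t ∧ s ^ 2 + t ^ 2 = ρ₁ ^ 2 ∧ (s - dist a b) ^ 2 + t ^ 2 = ρ₂ ^ 2 ∧
      apex a b ρ₁ ρ₂ = a + (b - a) * ⟨s / dist a b, t / dist a b⟩ := by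
  set D := dist a b
  set s := (ρ₁ ^ 2 + D ^ 2 - ρ₂ ^ 2) / (2 * D)
  have hD : 0 < D := (abs_nonneg _).trans_lt h₁
  have hs : 2 * D * s = ρ₁ ^ 2 + D ^ 2 - ρ₂ ^ 2 := mul_div_cancel₀ _ (by positivity)
  rw [abs_lt] at h₁
  -- Heron: `(2Dρ₁)² - (2Ds)²` factors into the four triangle-inequality terms.
  have ht : 0 < ρ₁ ^ 2 - s ^ 2 := by
    refine pos_of_mul_pos_right (a := (2 * D) ^ 2) ?_ (by positivity)
    have heron : (2 * D) ^ 2 * (ρ₁ ^ 2 - s ^ 2) =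
        (ρ₁ + ρ₂ - D) * (D + ρ₁ - ρ₂) * (D - ρ₁ + ρ₂) * (D + ρ₁ + ρ₂) := by
      linear_combination (-(2 * D * s) - (ρ₁ ^ 2 + D ^ 2 - ρ₂ ^ 2)) * hs
    rw [heron]
    apply mul_pos (mul_pos (mul_pos _ _) _) _ <;> linarith
  refine ⟨s, √(ρ₁ ^ 2 - s ^ 2), Real.sqrt_pos.2 ht, ?_, ?_, rfl⟩
  · rw [Real.sq_sqrt ht.le]; ring
  · rw [Real.sq_sqrt ht.le]; linear_combination -hs

lemma dist_apex_left (h₁ : |ρ₁ - ρ₂| < dist a b) (h₂ : dist a b < ρ₁ + ρ₂) :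
    dist (apex a b ρ₁ ρ₂) a = ρ₁ := by
  obtain ⟨s, t, -, hst, -, he⟩ := exists_apex_eq h₁ h₂
  have hD : 0 < dist a b := (abs_nonneg _).trans_lt h₁
  have hρ₁ : 0 ≤ ρ₁ := by linarith [neg_abs_le (ρ₁ - ρ₂)]
  rw [← sq_eq_sq₀ dist_nonneg hρ₁, he, dist_eq_norm, add_sub_cancel_left, norm_mul, mul_pow,
    ← dist_eq_norm, dist_comm, Complex.sq_norm, normSq_mk]
  field_simp
  linear_combination hst

lemma dist_apex_right (h₁ : |ρ₁ - ρ₂| < dist a b) (h₂ : dist a b < ρ₁ + ρ₂) :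
    dist (apex a b ρ₁ ρ₂) b = ρ₂ := by
  obtain ⟨s, t, -, -, hst, he⟩ := exists_apex_eq h₁ h₂
  have hD : 0 < dist a b := (abs_nonneg _).trans_lt h₁
  have hρ₂ : 0 ≤ ρ₂ := by linarith [le_abs_self (ρ₁ - ρ₂)]
  have hsub : apex a b ρ₁ ρ₂ - b = (b - a) * (⟨s / dist a b, t / dist a b⟩ - 1) := by
    rw [he]; ring
  rw [← sq_eq_sq₀ dist_nonneg hρ₂, dist_eq_norm, hsub, norm_mul, mul_pow,
    ← dist_eq_norm, dist_comm, Complex.sq_norm, normSq_apply]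
  simp only [sub_re, sub_im, one_re, one_im]
  field_simp
  linear_combination hst

lemma side_apex_pos (h₁ : |ρ₁ - ρ₂| < dist a b) (h₂ : dist a b < ρ₁ + ρ₂) :
    0 < side a b (apex a b ρ₁ ρ₂) := by
  obtain ⟨s, t, ht, -, -, he⟩ := exists_apex_eq h₁ h₂
  have hD : 0 < dist a b := (abs_nonneg _).trans_lt h₁
  have hside : side a b (apex a b ρ₁ ρ₂) = dist a b * t := by
    have hn : normSq (b - a) = dist a b ^ 2 := by
      rw [← Complex.sq_norm, ← dist_eq_norm, dist_comm]
    rw [side, he, add_sub_cancel_left, mul_comm (b - a), mul_assoc, mul_conj, hn]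
    simp only [mul_im, ofReal_re, ofReal_im, mul_zero, zero_add]
    field_simp
  rw [hside]; positivity

end apex

-- The values of `r = dist (corner₁ p d r) d` for which both corners exist.
def paramInterval (p q : ℕ) (d : ℝ) : Set ℝ :=
  Ioo (max |d - p| |(q : ℝ) - 1|) (min (d + p) (q + 1))

def corner₁ (p : ℕ) (d r : ℝ) : ℂ := apex 0 d p r

def corner₂ (p q : ℕ) (d r : ℝ) : ℂ := apex (corner₁ p d r) d 1 q

section configuration

variable {p q : ℕ} {d r : ℝ}

lemma corner₁_spec (hd : 0 < d) (hr : r ∈ paramInterval p q d) :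
    dist (corner₁ p d r) 0 = p ∧ dist (corner₁ p d r) d = r ∧ 0 < side 0 d (corner₁ p d r) := by
  have h0d : dist (0 : ℂ) d = d := by simp [dist_eq, abs_of_pos hd]
  obtain ⟨hlo, hhi⟩ := hr
  rw [max_lt_iff] at hlo
  rw [lt_min_iff] at hhi
  have h₁ : |(p : ℝ) - r| < dist (0 : ℂ) d := by
    rw [h0d, abs_sub_lt_iff]; constructor <;> linarith [le_abs_self (d - p), neg_abs_le (d - p)]
  have h₂ : dist (0 : ℂ) d < p + r := by rw [h0d]; linarith [le_abs_self (d - p)]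
  exact ⟨dist_apex_left h₁ h₂, dist_apex_right h₁ h₂, side_apex_pos h₁ h₂⟩

lemma corner₂_spec (hd : 0 < d) (hr : r ∈ paramInterval p q d) :
    dist (corner₂ p q d r) (corner₁ p d r) = 1 ∧ dist (corner₂ p q d r) d = q ∧
      0 < side (corner₁ p d r) d (corner₂ p q d r) := by
  have hc₁d := (corner₁_spec hd hr).2.1
  obtain ⟨hlo, hhi⟩ := hr
  rw [max_lt_iff] at hlo
  rw [lt_min_iff] at hhi
  have h₁ : |1 - (q : ℝ)| < dist (corner₁ p d r) d := by rw [hc₁d, abs_sub_comm]; exact hlo.2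
  have h₂ : dist (corner₁ p d r) d < 1 + q := by rw [hc₁d]; linarith
  exact ⟨dist_apex_left h₁ h₂, dist_apex_right h₁ h₂, side_apex_pos h₁ h₂⟩

-- `0` and `corner₂` lie on opposite sides of the line through `corner₁` and `d`, and the segment
-- from `d` to `corner₂` stays on the side of `corner₂`.
lemma lineMap_corner₂_ne_zero (hd : 0 < d) (hr : r ∈ paramInterval p q d) {t : ℝ}
    (ht : 0 ≤ t) : lineMap (d : ℂ) (corner₂ p q d r) t ≠ 0 := by
  intro h
  have h0 : side (corner₁ p d r) d 0 < 0 := by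
    rw [side_rotate, side_swap, neg_neg_iff_pos]; exact (corner₁_spec hd hr).2.2
  have := side_lineMap (corner₁ p d r) d (corner₂ p q d r) t
  rw [h] at this
  nlinarith [(corner₂_spec hd hr).2.2]

def vertex (p q : ℕ) (d r : ℝ) (i : ℕ) : ℂ :=
  if i ≤ p then lineMap 0 (corner₁ p d r) ((i : ℝ) / p)
  else lineMap (d : ℂ) (corner₂ p q d r) (((p + q + 1 - i : ℕ) : ℝ) / q)

lemma vertex_zero : vertex p q d r 0 = 0 := by
  simp [vertex]

lemma vertex_last : vertex p q d r (p + q + 1) = d := by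
  simp [vertex]

lemma dist_vertex_zero (hd : 0 < d) (hr : r ∈ paramInterval p q d) {i : ℕ} (hi : i ≤ p) :
    dist (vertex p q d r i) 0 = i := by
  rw [vertex, if_pos hi, dist_lineMap_left, dist_comm, (corner₁_spec hd hr).1]
  rcases Nat.eq_zero_or_pos p with rfl | hp
  · simp [Nat.le_zero.1 hi]
  · rw [Real.norm_of_nonneg (by positivity), div_mul_cancel₀ _ (by positivity)]

lemma dist_vertex_last (hd : 0 < d) (hr : r ∈ paramInterval p q d) {i : ℕ} (hpi : p < i)
    (hi : i ≤ p + q + 1) : dist (vertex p q d r i) d = (p + q + 1 - i : ℕ) := by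
  rw [vertex, if_neg hpi.not_ge, dist_lineMap_left, dist_comm, (corner₂_spec hd hr).2.1]
  rcases Nat.eq_zero_or_pos q with rfl | hq
  · simp [show p + 0 + 1 - i = 0 by omega]
  · rw [Real.norm_of_nonneg (by positivity), div_mul_cancel₀ _ (by positivity)]

lemma dist_vertex_succ (hd : 0 < d) (hr : r ∈ paramInterval p q d) (hp : 0 < p) (hq : 0 < q)
    {i : ℕ} (hi : i < p + q + 1) : dist (vertex p q d r i) (vertex p q d r (i + 1)) = 1 := by
  obtain ⟨hc₁, -, -⟩ := corner₁_spec hd hr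
  obtain ⟨hc₂c₁, hc₂d, -⟩ := corner₂_spec hd hr
  rcases lt_trichotomy (i + 1) (p + 1) with hlt | heq | hgt
  · rw [vertex, vertex, if_pos (by omega), if_pos (by omega), dist_lineMap_lineMap,
      dist_comm (0 : ℂ), hc₁, Real.dist_eq, ← sub_div, abs_div, Nat.abs_cast,
      div_mul_cancel₀ _ (by positivity)]
    simp
  · have hpi : p = i := by omega
    subst hpi
    rw [vertex, vertex, if_pos le_rfl, if_neg (by omega), show p + q + 1 - (p + 1) = q by omega,
      div_self (by positivity), div_self (by positivity), lineMap_apply_one, lineMap_apply_one,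
      dist_comm, hc₂c₁]
  · rw [vertex, vertex, if_neg (by omega), if_neg (by omega), dist_lineMap_lineMap,
      dist_comm (d : ℂ), hc₂d, Real.dist_eq, ← sub_div, abs_div, Nat.abs_cast,
      div_mul_cancel₀ _ (by positivity), show p + q + 1 - i = p + q + 1 - (i + 1) + 1 by omega]
    simp

lemma injOn_corner₁ (hd : 0 < d) : InjOn (corner₁ p d) (paramInterval p q d) :=
    fun r hr r' hr' h => by
  rw [← (corner₁_spec hd hr).2.1, ← (corner₁_spec hd hr').2.1, h]

lemma injOn_vertex_param (hd : 0 < d) {i : ℕ} (hi₀ : 0 < i) (hi : i ≤ p) :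
    InjOn (fun r => vertex p q d r i) (paramInterval p q d) := fun r hr r' hr' h => by
  refine injOn_corner₁ hd hr hr' (lineMap_right_injective (a := (0 : ℂ)) (c := (i : ℝ) / p) ?_ ?_)
  · have : 0 < p := hi₀.trans_le hi
    positivity
  · simpa only [vertex, if_pos hi] using h

lemma vertex_ne_vertex_of_corner₂_ne (hd : 0 < d) {r r' : ℝ} (hr : r ∈ paramInterval p q d)
    (hr' : r' ∈ paramInterval p q d) (hc₂ : corner₂ p q d r ≠ corner₂ p q d r') {i : ℕ}
    (hi₀ : 0 < i) (hi : i < p + q + 1) : vertex p q d r i ≠ vertex p q d r' i := by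
  intro h
  by_cases hip : i ≤ p
  · exact hc₂ (congrArg (corner₂ p q d) (injOn_vertex_param hd hi₀ hip hr hr' h))
  · refine hc₂ (lineMap_right_injective (a := (d : ℂ)) (c := ((p + q + 1 - i : ℕ) : ℝ) / q) ?_ ?_)
    · have : 0 < p + q + 1 - i := by omega
      have : 0 < q := by omega
      positivity
    · simpa only [vertex, if_neg hip] using h

def simpleParams (p q : ℕ) (d : ℝ) : Set ℝ :=
  {r ∈ paramInterval p q d | ∀ i ≤ p, ∀ i', p < i' → i' ≤ p + q + 1 →
    vertex p q d r i ≠ vertex p q d r i'}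

lemma injOn_vertex (hd : 0 < d) (hr : r ∈ simpleParams p q d) :
    InjOn (vertex p q d r) (Iic (p + q + 1)) := by
  intro i hi i' hi' h
  rcases le_or_gt i p with hip | hip <;> rcases le_or_gt i' p with hip' | hip'
  · exact_mod_cast (dist_vertex_zero hd hr.1 hip).symm.trans
      (h ▸ dist_vertex_zero hd hr.1 hip')
  · exact absurd h (hr.2 i hip i' hip' hi')
  · exact absurd h.symm (hr.2 i' hip' i hip hi)
  · have := (dist_vertex_last hd hr.1 hip hi).symm.trans (h ▸ dist_vertex_last hd hr.1 hip' hi')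
    have := Nat.cast_injective this
    simp only [mem_Iic] at hi hi'
    omega

lemma finite_setOf_vertex_eq (hd : 0 < d) {i i' : ℕ} (hi : i ≤ p) (hpi' : p < i')
    (hi' : i' ≤ p + q + 1) :
    {r ∈ paramInterval p q d | vertex p q d r i = vertex p q d r i'}.Finite := by
  rcases Nat.eq_zero_or_pos i with rfl | hi₀
  · refine finite_empty.subset fun r ⟨hr, h⟩ => ?_
    rw [vertex_zero, vertex, if_neg hpi'.not_ge] at h
    exact lineMap_corner₂_ne_zero hd hr (by positivity) h.symm
  · refine Finite.of_finite_image (f := fun r => vertex p q d r i) ?_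
      ((injOn_vertex_param hd hi₀ hi).mono fun r hr => hr.1)
    refine (finite_sphere_inter_sphere finrank_real_complex (c₁ := 0) (c₂ := (d : ℂ))
      (by exact_mod_cast hd.ne) i (p + q + 1 - i' : ℕ)).subset ?_
    rintro _ ⟨r, ⟨hr, h⟩, rfl⟩
    refine ⟨dist_vertex_zero hd hr hi, ?_⟩
    simp only [mem_sphere, h]
    exact dist_vertex_last hd hr hpi' hi'

lemma finite_setOf_corner₂_eq (hd : 0 < d) (c : ℂ) :
    {r ∈ paramInterval p q d | corner₂ p q d r = c}.Finite := by
  rcases eq_or_ne c 0 with rfl | hc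
  · refine finite_empty.subset fun r ⟨hr, h⟩ => ?_
    exact lineMap_corner₂_ne_zero hd hr zero_le_one (by rw [lineMap_apply_one, h])
  · refine Finite.of_finite_image (f := corner₁ p d) ?_
      ((injOn_corner₁ hd).mono fun r hr => hr.1)
    refine (finite_sphere_inter_sphere finrank_real_complex hc.symm p 1).subset ?_
    rintro _ ⟨r, ⟨hr, h⟩, rfl⟩
    refine ⟨(corner₁_spec hd hr).1, ?_⟩
    rw [mem_sphere, ← h, dist_comm]
    exact (corner₂_spec hd hr).1

lemma exists_seq_simpleParams (hd : 0 < d) (hdn : d < p + q + 1) (hq : 0 < q) (hqp : q ≤ p)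
    (hpq : p ≤ q + 1) :
    ∃ ρ : ℕ → ℝ, (∀ j, ρ j ∈ simpleParams p q d) ∧ Injective (corner₂ p q d ∘ ρ) := by
  have hI : (paramInterval p q d).Infinite := by
    have hq' : (1 : ℝ) ≤ q := by exact_mod_cast hq
    have hqp' : (q : ℝ) ≤ p := by exact_mod_cast hqp
    have hpq' : (p : ℝ) ≤ q + 1 := by exact_mod_cast hpq
    refine Ioo_infinite (max_lt (lt_min ?_ ?_) (lt_min ?_ ?_)) <;>
      rw [abs_sub_lt_iff] <;> constructor <;> linarith
  have hbad : (paramInterval p q d \ simpleParams p q d).Finite := by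
    refine ((finite_Iic p).biUnion fun i hi => (finite_Ioc p (p + q + 1)).biUnion
      fun i' hi' => finite_setOf_vertex_eq (d := d) hd hi hi'.1 hi'.2).subset ?_
    rintro r ⟨hr, hgood⟩
    simp only [simpleParams, mem_ofPred_eq, not_and, not_forall, not_not] at hgood
    obtain ⟨i, hi, i', hpi', hi', h⟩ := hgood hr
    exact mem_biUnion hi (mem_biUnion ⟨hpi', hi'⟩ ⟨hr, h⟩)
  refine exists_seq_mem_injective_comp ((hI.sdiff hbad).mono fun r hr => ?_)
    fun c => (finite_setOf_corner₂_eq hd c).subset fun r hr => ⟨hr.1.1, hr.2⟩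
  exact of_not_not fun h => hr.2 ⟨hr.1, h⟩

end configuration

end
end UnitDistancePath

open UnitDistancePath

/-- For `n ≥ 3` and prescribed endpoints with `0 < dist u₀ uₙ < n`, there are
infinitely many injective unit-distance path realizations `u₀, …, uₙ`
(parametrized below by `j : ℕ`, with the interior points differing across
realizations), such that moreover `|u₀ uᵢ| = i` for `i ≤ ⌊n/2⌋` and
`|uₙ uᵢ| = n − i` for `⌊n/2⌋ < i ≤ n`. -/
theorem infinitely_many_unit_paths (n : ℕ) (hn : 3 ≤ n)
    (u0 un : EuclideanSpace ℝ (Fin 2))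
    (h0 : 0 < dist u0 un) (h1 : dist u0 un < n) :
    ∃ f : ℕ → ℕ → EuclideanSpace ℝ (Fin 2),
      (∀ j, f j 0 = u0 ∧ f j n = un) ∧
      (∀ j, ∀ i < n, dist (f j i) (f j (i + 1)) = 1) ∧
      (∀ j, ∀ i i', i ≤ n → i' ≤ n → i ≠ i' → f j i ≠ f j i') ∧
      (∀ j j', j ≠ j' → ∀ i, 1 ≤ i → i ≤ n - 1 → f j i ≠ f j' i) ∧
      (∀ j, ∀ i ≤ n / 2, dist u0 (f j i) = (i : ℝ)) ∧
      (∀ j, ∀ i, n / 2 < i → i ≤ n → dist un (f j i) = (n : ℝ) - (i : ℝ)) := by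
  set d := dist u0 un
  set p := n / 2
  set q := n - 1 - n / 2
  have hn' : n = p + q + 1 := by omega
  obtain ⟨φ, hφ, hφ0, hφd⟩ := exists_isometry_complex finrank_euclideanSpace_fin (dist_pos.1 h0)
  obtain ⟨ρ, hρ, hc₂⟩ := exists_seq_simpleParams (p := p) (q := q) h0
    (by rw [hn'] at h1; exact_mod_cast h1) (by omega) (by omega) (by omega)
  refine ⟨fun j i => φ (vertex p q d (ρ j) i), fun j => ?_, fun j i hi => ?_,
    fun j i i' hi hi' hne h => ?_, fun j j' hjj' i hi₁ hi h => ?_, fun j i hi => ?_,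
    fun j i hpi hi => ?_⟩
  · exact ⟨by simp only [vertex_zero, hφ0], by simp only [hn', vertex_last, d, hφd]⟩
  · rw [hφ.dist_eq]; exact dist_vertex_succ h0 (hρ j).1 (by omega) (by omega) (by omega)
  · exact hne (injOn_vertex h0 (hρ j) (mem_Iic.2 (by omega)) (mem_Iic.2 (by omega))
      (hφ.injective h))
  · exact vertex_ne_vertex_of_corner₂_ne h0 (hρ j).1 (hρ j').1 (hc₂.ne hjj') hi₁ (by omega)
      (hφ.injective h)
  · rw [← hφ0, hφ.dist_eq, dist_comm]; exact dist_vertex_zero h0 (hρ j).1 hi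
  · rw [← hφd, hφ.dist_eq, dist_comm, dist_vertex_last h0 (hρ j).1 hpi (by omega), ← hn',
      Nat.cast_sub hi]
end
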